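/- arXiv:1304.2607 — 6 statements merged into one kernel-verified Lean document; each statement's English description precedes it below -/
import Mathlib

section
/- For all z ∈ ℂ^m and ξ ∈ ℂ^{l+1}, det M̂(z,ξ) = (1+|z|²)^l · |ξ|^{2m}; equivalently, det M̂(z,ξ) = e^{mρ} · (1+|z|²)^{-(m-l)} where e^ρ = (1+|z|²)|ξ|². -/
open Matrix
open scoped ComplexOrder

noncomputable section

/-- `nsq v = ∑ |vᵢ|²`, the squared Euclidean norm. -/
def nsq {k : ℕ} (v : Fin k → ℂ) : ℝ := ∑ i, Complex.normSq (v i)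

/-- The off-diagonal block `B` with entries `B i α = conj (z i) * ξ α`. -/
def Bmat (m l : ℕ) (z : Fin m → ℂ) (ξ : Fin (l + 1) → ℂ) :
    Matrix (Fin m) (Fin (l + 1)) ℂ :=
  fun i α => (starRingEnd ℂ) (z i) * ξ α

/-- The complex Hessian matrix `M̂(z,ξ)` of the function `e^ρ = (1+|z|²)|ξ|²`:
`M̂ = fromBlocks (|ξ|²•I) B Bᴴ ((1+|z|²)•I)`. -/
def Mhat (m l : ℕ) (z : Fin m → ℂ) (ξ : Fin (l + 1) → ℂ) :
    Matrix (Fin m ⊕ Fin (l + 1)) (Fin m ⊕ Fin (l + 1)) ℂ :=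
  Matrix.fromBlocks (((nsq ξ : ℝ) : ℂ) • 1) (Bmat m l z ξ) (Bmat m l z ξ)ᴴ
    (((1 + nsq z : ℝ) : ℂ) • 1)

/-- The Fubini–Study Hessian `Θ₋(z)_{ij} = δ_{ij}/(1+|z|²) − conj(zᵢ)z_j/(1+|z|²)²`. -/
def ThetaMinus (m : ℕ) (z : Fin m → ℂ) : Matrix (Fin m) (Fin m) ℂ :=
  fun i j => (if i = j then 1 else 0) / ((1 + nsq z : ℝ) : ℂ)
    - (starRingEnd ℂ) (z i) * z j / ((1 + nsq z : ℝ) : ℂ) ^ 2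

/-- The Hessian `Θ₊(ξ)_{αβ} = δ_{αβ}/|ξ|² − conj(ξ_α)ξ_β/|ξ|⁴` of `log |ξ|²`. -/
def ThetaPlus (l : ℕ) (ξ : Fin (l + 1) → ℂ) : Matrix (Fin (l + 1)) (Fin (l + 1)) ℂ :=
  fun α β => (if α = β then 1 else 0) / ((nsq ξ : ℝ) : ℂ)
    - (starRingEnd ℂ) (ξ α) * ξ β / ((nsq ξ : ℝ) : ℂ) ^ 2

/-- Block diagonal sum `P ⊕ Q = fromBlocks P 0 0 Q`. -/
def dsum {m k : ℕ} (P : Matrix (Fin m) (Fin m) ℂ) (Q : Matrix (Fin k) (Fin k) ℂ) :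
    Matrix (Fin m ⊕ Fin k) (Fin m ⊕ Fin k) ℂ :=
  Matrix.fromBlocks P 0 0 Q

end

/-- Lemma 2.6 (first identity): `det M̂(z,ξ) = (1+|z|²)^l |ξ|^{2m}`, equivalently
`det M̂(z,ξ) = e^{mρ} (1+|z|²)^{-(m-l)}` where `e^ρ = (1+|z|²)|ξ|²`. -/
theorem stmt2 (m l : ℕ) (hm : 1 ≤ m) (z : Fin m → ℂ) (ξ : Fin (l + 1) → ℂ) :
    (Mhat m l z ξ).det = ((1 + nsq z : ℝ) : ℂ) ^ l * ((nsq ξ : ℝ) : ℂ) ^ m ∧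
    (Mhat m l z ξ).det =
      (((1 + nsq z) * nsq ξ : ℝ) : ℂ) ^ m * ((1 + nsq z : ℝ) : ℂ) ^ (-((m : ℤ) - l)) := by
  set t : ℂ := ((1 + nsq z : ℝ) : ℂ) with ht_def
  set s : ℂ := ((nsq ξ : ℝ) : ℂ) with hs_def
  have hnsz : (0:ℝ) ≤ nsq z := Finset.sum_nonneg fun i _ => Complex.normSq_nonneg _
  have ht0 : t ≠ 0 := by
    simp only [ht_def, ne_eq, Complex.ofReal_eq_zero]
    positivity
  have hinv1 : (t • (1 : Matrix (Fin (l+1)) (Fin (l+1)) ℂ)) * (t⁻¹ • 1) = 1 := by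
    rw [smul_mul_smul_comm, mul_inv_cancel₀ ht0, one_mul, one_smul]
  haveI : Invertible (t • (1 : Matrix (Fin (l+1)) (Fin (l+1)) ℂ)) :=
    ⟨t⁻¹ • 1, by rw [smul_mul_smul_comm, inv_mul_cancel₀ ht0, one_mul, one_smul], hinv1⟩
  have key : (Mhat m l z ξ).det = t ^ l * s ^ m := by
    rw [Mhat, Matrix.det_fromBlocks₂₂, invOf_eq_right_inv hinv1]
    have hBB : Bmat m l z ξ * (Bmat m l z ξ)ᴴ =
        Matrix.of (fun i j => (starRingEnd ℂ) (z i) * z j * s) := by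
      ext i j
      simp only [Matrix.mul_apply, Matrix.conjTranspose_apply, Bmat, Matrix.of_apply,
        Complex.star_def, _root_.map_mul, Complex.conj_conj]
      have h1 : ∀ x ∈ Finset.univ, (starRingEnd ℂ) (z i) * ξ x *
          (z j * (starRingEnd ℂ) (ξ x)) =
          (starRingEnd ℂ) (z i) * z j * ((Complex.normSq (ξ x) : ℝ) : ℂ) := fun x _ => by
        rw [← Complex.mul_conj]
        ring
      rw [Finset.sum_congr rfl h1, ← Finset.mul_sum]
      congr 1
      rw [hs_def, nsq]
      push_cast
      rfl
    have hmat : (s • (1 : Matrix (Fin m) (Fin m) ℂ)) -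
        Bmat m l z ξ * (t⁻¹ • (1 : Matrix (Fin (l+1)) (Fin (l+1)) ℂ)) * (Bmat m l z ξ)ᴴ =
        s • (1 + Matrix.replicateCol Unit (fun i => -t⁻¹ * (starRingEnd ℂ) (z i)) *
          Matrix.replicateRow Unit z) := by
      rw [Matrix.mul_smul, Matrix.mul_one, Matrix.smul_mul, hBB]
      ext i j
      simp only [Matrix.sub_apply, Matrix.smul_apply, Matrix.add_apply, Matrix.one_apply,
        Matrix.mul_apply, Matrix.replicateCol_apply, Matrix.replicateRow_apply, Matrix.of_apply, smul_eq_mul,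
        Finset.univ_unique, Finset.sum_const, Finset.card_singleton, one_smul]
      by_cases h : i = j <;> simp [h] <;> ring
    rw [hmat, Matrix.det_smul, Matrix.det_smul, Matrix.det_one,
      Matrix.det_one_add_replicateCol_mul_replicateRow]
    have hdot : (z ⬝ᵥ fun i => -t⁻¹ * (starRingEnd ℂ) (z i)) =
        -t⁻¹ * ((nsq z : ℝ) : ℂ) := by
      simp only [dotProduct, nsq, Complex.ofReal_sum, Finset.mul_sum]
      refine Finset.sum_congr rfl fun i _ => ?_
      rw [Complex.normSq_eq_conj_mul_self]
      push_cast
      ring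
    rw [hdot]
    have ht1 : t = 1 + ((nsq z : ℝ) : ℂ) := by rw [ht_def]; push_cast; ring
    have hne : (1 : ℂ) + ((nsq z : ℝ) : ℂ) ≠ 0 := ht1 ▸ ht0
    have h2 : (1 : ℂ) + -t⁻¹ * ((nsq z : ℝ) : ℂ) = t⁻¹ := by
      rw [ht1]
      field_simp
      ring
    rw [h2, Fintype.card_fin, Fintype.card_fin, ht1]
    field_simp
    push_cast
    ring
  refine ⟨key, ?_⟩
  rw [key, Complex.ofReal_mul, mul_pow, ← hs_def, ← ht_def,
    show (-((m : ℤ) - l)) = (l : ℤ) - m by ring]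
  rw [show (t ^ m * s ^ m * t ^ ((l:ℤ) - m) = (t ^ m * t ^ ((l:ℤ) - m)) * s ^ m) from by ring]
  congr 1
  rw [← zpow_natCast t m, ← zpow_natCast t l, ← zpow_add₀ ht0]
  congr 1
  ring
end

section
/- For all z ∈ ℂ^m and ξ ∈ ℂ^{l+1}, det( (Θ₋(z) ⊕ 0) + M̂(z,ξ) ) = (1 + (1+|z|²)|ξ|²)^m · (1+|z|²)^{-(m-l)}. -/
open Matrix
open scoped ComplexOrder

/-- Lemma 2.6 (second identity): the volume form of `ω₋ = θ₋ + ω̂`, i.e.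
`det((Θ₋(z) ⊕ 0) + M̂(z,ξ)) = (1 + (1+|z|²)|ξ|²)^m (1+|z|²)^{-(m-l)}`. -/
theorem stmt3 (m l : ℕ) (hm : 1 ≤ m) (z : Fin m → ℂ) (ξ : Fin (l + 1) → ℂ) :
    (dsum (ThetaMinus m z) (0 : Matrix (Fin (l + 1)) (Fin (l + 1)) ℂ)
        + Mhat m l z ξ).det =
      ((1 + (1 + nsq z) * nsq ξ : ℝ) : ℂ) ^ m
        * ((1 + nsq z : ℝ) : ℂ) ^ (-((m : ℤ) - l)) := by
  classical
  set s : ℂ := ((1 + nsq z : ℝ) : ℂ) with hs_def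
  set t : ℂ := ((nsq ξ : ℝ) : ℂ) with ht_def
  have hnz : (0:ℝ) ≤ nsq z := Finset.sum_nonneg fun i _ => Complex.normSq_nonneg _
  have hnξ : (0:ℝ) ≤ nsq ξ := Finset.sum_nonneg fun i _ => Complex.normSq_nonneg _
  have hs : s ≠ 0 := by
    simp only [hs_def, ne_eq, Complex.ofReal_eq_zero]
    positivity
  -- rewrite as a block matrix
  have hblock : dsum (ThetaMinus m z) (0 : Matrix (Fin (l + 1)) (Fin (l + 1)) ℂ)
      + Mhat m l z ξ
      = Matrix.fromBlocks (ThetaMinus m z + t • 1) (Bmat m l z ξ) (Bmat m l z ξ)ᴴ (s • 1) := by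
    rw [dsum, Mhat, Matrix.fromBlocks_add]
    simp only [zero_add]
    rfl
  rw [hblock]
  haveI : Invertible (s • (1 : Matrix (Fin (l+1)) (Fin (l+1)) ℂ)) :=
    ⟨s⁻¹ • 1, by rw [smul_mul_smul_comm, inv_mul_cancel₀ hs, one_mul, one_smul],
      by rw [smul_mul_smul_comm, mul_inv_cancel₀ hs, one_mul, one_smul]⟩
  have hinv : ⅟(s • (1 : Matrix (Fin (l+1)) (Fin (l+1)) ℂ)) = s⁻¹ • 1 :=
    invOf_eq_right_inv (by rw [smul_mul_smul_comm, mul_inv_cancel₀ hs, one_mul, one_smul])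
  rw [Matrix.det_fromBlocks₂₂, hinv]
  -- the Schur complement
  have hzsum : (∑ j, z j * (starRingEnd ℂ) (z j)) = ((nsq z : ℝ) : ℂ) := by
    rw [nsq, Complex.ofReal_sum]
    exact Finset.sum_congr rfl fun j _ => Complex.mul_conj _
  have hξsum : (∑ α, ξ α * (starRingEnd ℂ) (ξ α)) = t := by
    rw [ht_def, nsq, Complex.ofReal_sum]
    exact Finset.sum_congr rfl fun j _ => Complex.mul_conj _
  have hBB : Bmat m l z ξ * (Bmat m l z ξ)ᴴ
      = Matrix.of (fun i j => (starRingEnd ℂ) (z i) * z j * t) := by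
    ext i j
    simp only [Matrix.mul_apply, Matrix.conjTranspose_apply, Bmat, Matrix.of_apply]
    rw [← hξsum, Finset.mul_sum]
    refine Finset.sum_congr rfl fun α _ => ?_
    simp only [star_mul', Complex.star_def, Complex.conj_conj]
    ring
  have hschur : ThetaMinus m z + t • 1 - Bmat m l z ξ * ((s⁻¹ • 1 : Matrix (Fin (l+1)) (Fin (l+1)) ℂ)) * (Bmat m l z ξ)ᴴ
      = (s⁻¹ + t) • (1 + Matrix.replicateCol (Fin 1)
          (((-s⁻¹) • (fun i => (starRingEnd ℂ) (z i)) : Fin m → ℂ))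
          * Matrix.replicateRow (Fin 1) z) := by
    rw [Matrix.mul_smul, Matrix.mul_one, Matrix.smul_mul, hBB]
    ext i j
    have hs' : ((1 + nsq z : ℝ) : ℂ) ≠ 0 := hs
    by_cases h : i = j <;>
      simp only [Matrix.sub_apply, Matrix.add_apply, Matrix.smul_apply, Matrix.mul_apply,
        Matrix.one_apply, ThetaMinus, Matrix.of_apply, Matrix.replicateCol_apply, Matrix.replicateRow_apply,
        Pi.smul_apply, smul_eq_mul, Fin.sum_univ_one, h, if_true, if_pos, if_neg,
        not_false_iff, mul_one, mul_zero] <;>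
      · rw [← hs_def]
        field_simp
        ring
  have hdot : z ⬝ᵥ (((-s⁻¹) • (fun i => (starRingEnd ℂ) (z i)) : Fin m → ℂ))
      = -s⁻¹ * ((nsq z : ℝ) : ℂ) := by
    simp only [dotProduct, Pi.smul_apply, smul_eq_mul]
    rw [← hzsum, Finset.mul_sum]
    exact Finset.sum_congr rfl fun j _ => by ring
  rw [hschur, Matrix.det_smul, Matrix.det_smul, Matrix.det_one, mul_one,
    (show Matrix.det ((1 : Matrix (Fin m) (Fin m) ℂ) + Matrix.replicateCol (Fin 1)
        (((-s⁻¹) • (fun i => (starRingEnd ℂ) (z i)) : Fin m → ℂ))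
        * Matrix.replicateRow (Fin 1) z)
        = 1 + z ⬝ᵥ (((-s⁻¹) • (fun i => (starRingEnd ℂ) (z i)) : Fin m → ℂ)) by
      convert Matrix.det_one_add_replicateCol_mul_replicateRow (ι := Fin 1)
        (((-s⁻¹) • (fun i => (starRingEnd ℂ) (z i)) : Fin m → ℂ)) z <;> rfl), hdot, Fintype.card_fin, Fintype.card_fin]
  have hzs : ((nsq z : ℝ) : ℂ) = s - 1 := by rw [hs_def]; push_cast; ring
  have h1st : ((1 + (1 + nsq z) * nsq ξ : ℝ) : ℂ) = 1 + s * t := by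
    rw [hs_def, ht_def]; push_cast; ring
  have hzpow : s ^ (-((m : ℤ) - l)) = s ^ l / s ^ m := by
    rw [neg_sub, zpow_sub₀ hs, zpow_natCast, zpow_natCast]
  rw [h1st, hzpow, hzs]
  have hc : s⁻¹ + t = (1 + s * t) / s := by rw [eq_div_iff hs]; field_simp
  rw [hc]
  field_simp
  rw [div_pow, mul_div_assoc', div_mul_eq_mul_div, div_mul_cancel₀ _ (pow_ne_zero _ hs)]
  ring
end

section
/- Fix integers m ≥ 1 and l ≥ 0. Let z ∈ ℂ^m, ξ ∈ ℂ^{l+1} with ξ ≠ 0, and let a, p, q be real numbers. Let v ∈ ℂ^{m+l+1} be the vector whose first m components are v_i = conj(z_i)/(1+|z|²) and whose last l+1 components are v_α = conj(ξ_α)/|ξ|² (the components of ∂ρ for ρ = log((1+|z|²)|ξ|²)). Then det( (a+p)·(Θ₋(z) ⊕ 0) + p·(0 ⊕ Θ₊(ξ)) + q·v vᴴ ) = (a+p)^m · p^l · q · ((1+|z|²)|ξ|²)^{-(l+1)} · (1+|z|²)^{-(m-l)}. -/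
open Matrix
open scoped ComplexOrder

/-- The components of `∂ρ` for `ρ = log((1+|z|²)|ξ|²)`: first `m` components
`conj(zᵢ)/(1+|z|²)`, last `l+1` components `conj(ξ_α)/|ξ|²`. -/
noncomputable def vradial (m l : ℕ) (z : Fin m → ℂ) (ξ : Fin (l + 1) → ℂ) :
    Fin m ⊕ Fin (l + 1) → ℂ :=
  Sum.elim (fun i => (starRingEnd ℂ) (z i) / ((1 + nsq z : ℝ) : ℂ))
    (fun α => (starRingEnd ℂ) (ξ α) / ((nsq ξ : ℝ) : ℂ))

noncomputable section myaux

def Dmat (m l : ℕ) (z : Fin m → ℂ) (ξ : Fin (l + 1) → ℂ) (a p : ℝ) :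
    Matrix (Fin m ⊕ Fin (l + 1)) (Fin m ⊕ Fin (l + 1)) ℂ :=
  Matrix.fromBlocks ((((a + p : ℝ) : ℂ) / ((1 + nsq z : ℝ) : ℂ)) • 1) 0 0
    ((((p : ℝ) : ℂ) / ((nsq ξ : ℝ) : ℂ)) • 1)

def Umat (m l : ℕ) (z : Fin m → ℂ) (ξ : Fin (l + 1) → ℂ) :
    Matrix (Fin m ⊕ Fin (l + 1)) (Fin 2) ℂ :=
  fun x j => Sum.elim
    (fun i => if j = 0 then (starRingEnd ℂ) (z i) / ((1 + nsq z : ℝ) : ℂ) else 0)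
    (fun α => if j = 1 then (starRingEnd ℂ) (ξ α) / ((nsq ξ : ℝ) : ℂ) else 0) x

def Wmat (m l : ℕ) (z : Fin m → ℂ) (ξ : Fin (l + 1) → ℂ) (a p : ℝ) :
    Matrix (Fin m ⊕ Fin (l + 1)) (Fin 2) ℂ :=
  fun x j => Sum.elim
    (fun i => if j = 0 then (starRingEnd ℂ) (z i) / ((a + p : ℝ) : ℂ) else 0)
    (fun α => if j = 1 then (starRingEnd ℂ) (ξ α) / ((p : ℝ) : ℂ) else 0) x

def Vmat (m l : ℕ) (z : Fin m → ℂ) (ξ : Fin (l + 1) → ℂ) (a p q : ℝ) :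
    Matrix (Fin 2) (Fin m ⊕ Fin (l + 1)) ℂ :=
  fun j y => Sum.elim
    (fun i => (if j = 0 then ((q : ℂ) - ((a + p : ℝ) : ℂ)) else (q : ℂ)) * z i
        / ((1 + nsq z : ℝ) : ℂ))
    (fun β => (if j = 0 then (q : ℂ) else ((q : ℂ) - (p : ℂ))) * ξ β
        / ((nsq ξ : ℝ) : ℂ)) y

lemma decomp (m l : ℕ) (z : Fin m → ℂ) (ξ : Fin (l + 1) → ℂ) (a p q : ℝ) :
    (((a + p : ℝ) : ℂ) • dsum (ThetaMinus m z) (0 : Matrix (Fin (l + 1)) (Fin (l + 1)) ℂ)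
        + ((p : ℝ) : ℂ) • dsum (0 : Matrix (Fin m) (Fin m) ℂ) (ThetaPlus l ξ)
        + ((q : ℝ) : ℂ) • Matrix.vecMulVec (vradial m l z ξ) (star (vradial m l z ξ)))
      = Dmat m l z ξ a p + Umat m l z ξ * Vmat m l z ξ a p q := by
  have hkey : ∀ x : ℝ, ((x : ℝ) : ℂ) = (x : ℂ) := fun _ => rfl
  ext x y
  rcases x with i | α <;> rcases y with j | β
  · simp only [Dmat, Umat, Vmat, dsum, ThetaMinus, vradial, Matrix.add_apply,
      Matrix.smul_apply, Matrix.mul_apply, Fin.sum_univ_two, Matrix.vecMulVec_apply,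
      Matrix.fromBlocks_apply₁₁, Matrix.one_apply, Pi.star_apply, Sum.elim_inl,
      Matrix.zero_apply, smul_eq_mul, RCLike.star_def, map_div₀, Complex.conj_conj,
      Complex.conj_ofReal, if_true, if_false, Fin.zero_eta, Fin.mk_one, one_ne_zero,
      reduceCtorEq]
    generalize ((1 + nsq z : ℝ) : ℂ) = s
    split_ifs <;> ring
  · simp only [Dmat, Umat, Vmat, dsum, ThetaMinus, ThetaPlus, vradial, Matrix.add_apply,
      Matrix.smul_apply, Matrix.mul_apply, Fin.sum_univ_two, Matrix.vecMulVec_apply,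
      Matrix.fromBlocks_apply₁₂, Matrix.one_apply, Pi.star_apply, Sum.elim_inl,
      Sum.elim_inr, Matrix.zero_apply, smul_eq_mul, RCLike.star_def, map_div₀,
      Complex.conj_conj, Complex.conj_ofReal, one_ne_zero, reduceCtorEq]
    generalize ((1 + nsq z : ℝ) : ℂ) = s
    generalize ((nsq ξ : ℝ) : ℂ) = t
    norm_num
    ring
  · simp only [Dmat, Umat, Vmat, dsum, ThetaMinus, ThetaPlus, vradial, Matrix.add_apply,
      Matrix.smul_apply, Matrix.mul_apply, Fin.sum_univ_two, Matrix.vecMulVec_apply,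
      Matrix.fromBlocks_apply₂₁, Matrix.one_apply, Pi.star_apply, Sum.elim_inl,
      Sum.elim_inr, Matrix.zero_apply, smul_eq_mul, RCLike.star_def, map_div₀,
      Complex.conj_conj, Complex.conj_ofReal, one_ne_zero, reduceCtorEq]
    generalize ((1 + nsq z : ℝ) : ℂ) = s
    generalize ((nsq ξ : ℝ) : ℂ) = t
    norm_num
    ring
  · simp only [Dmat, Umat, Vmat, dsum, ThetaPlus, vradial, Matrix.add_apply,
      Matrix.smul_apply, Matrix.mul_apply, Fin.sum_univ_two, Matrix.vecMulVec_apply,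
      Matrix.fromBlocks_apply₂₂, Matrix.one_apply, Pi.star_apply, Sum.elim_inr,
      Matrix.zero_apply, smul_eq_mul, RCLike.star_def, map_div₀, Complex.conj_conj,
      Complex.conj_ofReal, one_ne_zero, reduceCtorEq]
    generalize ((nsq ξ : ℝ) : ℂ) = t
    norm_num
    split_ifs <;> ring

lemma DW_eq_U (m l : ℕ) (z : Fin m → ℂ) (ξ : Fin (l + 1) → ℂ) (a p : ℝ)
    (hap : ((a + p : ℝ) : ℂ) ≠ 0) (hp : ((p : ℝ) : ℂ) ≠ 0) :
    Dmat m l z ξ a p * Wmat m l z ξ a p = Umat m l z ξ := by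
  push_cast at hap
  ext x j
  rcases x with i | α <;>
    simp [Dmat, Wmat, Umat, Matrix.mul_apply, Fintype.sum_sum_type, Matrix.one_apply,
      mul_ite, ite_mul, mul_zero, zero_mul, Finset.sum_ite_eq, Finset.mem_univ] <;>
    split_ifs <;>
    first
      | rfl
      | (rw [div_mul_div_comm, mul_comm (1 + ((nsq z : ℝ) : ℂ)), mul_div_mul_left _ _ hap])
      | (rw [div_mul_div_comm, mul_comm ((nsq ξ : ℝ) : ℂ), mul_div_mul_left _ _ hp])

lemma sum_mul_conj {k : ℕ} (w : Fin k → ℂ) :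
    ∑ i, w i * (starRingEnd ℂ) (w i) = ((nsq w : ℝ) : ℂ) := by
  simp [Complex.mul_conj, nsq]

lemma nsq_nonneg {k : ℕ} (w : Fin k → ℂ) : 0 ≤ nsq w :=
  Finset.sum_nonneg fun i _ => Complex.normSq_nonneg _

lemma det_one_add_VW (m l : ℕ) (z : Fin m → ℂ) (ξ : Fin (l + 1) → ℂ) (a p q : ℝ)
    (ht : ((nsq ξ : ℝ) : ℂ) ≠ 0)
    (hap : ((a + p : ℝ) : ℂ) ≠ 0) (hp : ((p : ℝ) : ℂ) ≠ 0) :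
    (1 + Vmat m l z ξ a p q * Wmat m l z ξ a p).det
      = (q : ℂ) / (((1 + nsq z : ℝ) : ℂ) * ((p : ℝ) : ℂ)) := by
  have hs : (1 + ((nsq z : ℝ) : ℂ)) ≠ 0 := by
    intro h
    have h2 : ((1 + nsq z : ℝ) : ℂ) = 0 := by push_cast; linear_combination h
    have h3 : (1 : ℝ) + nsq z ≠ 0 := by
      have := nsq_nonneg z; intro hc; linarith
    exact h3 (by exact_mod_cast h2)
  push_cast at hap ⊢
  have hz : ∀ c d : ℂ, (∑ i, c * z i / (1 + ((nsq z : ℝ) : ℂ)) * ((starRingEnd ℂ) (z i) / d))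
      = c * ((nsq z : ℝ) : ℂ) / (1 + ((nsq z : ℝ) : ℂ)) / d := by
    intro c d
    rw [show (∑ i, c * z i / (1 + ((nsq z : ℝ) : ℂ)) * ((starRingEnd ℂ) (z i) / d))
        = (c / (1 + ((nsq z : ℝ) : ℂ)) / d) * ∑ i, z i * (starRingEnd ℂ) (z i) by
      rw [Finset.mul_sum]; exact Finset.sum_congr rfl fun i _ => by ring,
      sum_mul_conj]
    ring
  have hxi : ∀ c d : ℂ, (∑ β, c * ξ β / ((nsq ξ : ℝ) : ℂ) * ((starRingEnd ℂ) (ξ β) / d))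
      = c * ((nsq ξ : ℝ) : ℂ) / ((nsq ξ : ℝ) : ℂ) / d := by
    intro c d
    rw [show (∑ β, c * ξ β / ((nsq ξ : ℝ) : ℂ) * ((starRingEnd ℂ) (ξ β) / d))
        = (c / ((nsq ξ : ℝ) : ℂ) / d) * ∑ β, ξ β * (starRingEnd ℂ) (ξ β) by
      rw [Finset.mul_sum]; exact Finset.sum_congr rfl fun β _ => by ring,
      sum_mul_conj]
    ring
  rw [Matrix.det_fin_two]
  simp only [Matrix.add_apply, Matrix.one_apply, Matrix.mul_apply, Fintype.sum_sum_type,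
    Vmat, Wmat, Sum.elim_inl, Sum.elim_inr, if_true, if_false, one_ne_zero, zero_ne_one,
    reduceCtorEq, Fin.isValue]
  norm_num
  push_cast
  rw [hz, hz, hxi, hxi]
  field_simp
  ring

lemma det_D (m l : ℕ) (z : Fin m → ℂ) (ξ : Fin (l + 1) → ℂ) (a p : ℝ) :
    (Dmat m l z ξ a p).det
      = (((a + p : ℝ) : ℂ) / ((1 + nsq z : ℝ) : ℂ)) ^ m
        * (((p : ℝ) : ℂ) / ((nsq ξ : ℝ) : ℂ)) ^ (l + 1) := by
  rw [Dmat, Matrix.det_fromBlocks_zero₂₁]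
  simp [Matrix.det_smul, Fintype.card_fin]

lemma stmt4_main (m l : ℕ) (z : Fin m → ℂ) (ξ : Fin (l + 1) → ℂ)
    (hξ : ξ ≠ 0) (a p q : ℝ) (hp : p ≠ 0) (hap : a + p ≠ 0) :
    (((a + p : ℝ) : ℂ) • dsum (ThetaMinus m z) (0 : Matrix (Fin (l + 1)) (Fin (l + 1)) ℂ)
        + ((p : ℝ) : ℂ) • dsum (0 : Matrix (Fin m) (Fin m) ℂ) (ThetaPlus l ξ)
        + ((q : ℝ) : ℂ) • Matrix.vecMulVec (vradial m l z ξ) (star (vradial m l z ξ))).det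
      = ((a + p : ℝ) : ℂ) ^ m * ((p : ℝ) : ℂ) ^ l * ((q : ℝ) : ℂ)
        * (((1 + nsq z) * nsq ξ : ℝ) : ℂ) ^ (-((l : ℤ) + 1))
        * ((1 + nsq z : ℝ) : ℂ) ^ (-((m : ℤ) - l)) := by
  have ht0 : 0 < nsq ξ := by
    obtain ⟨α, hα⟩ := Function.ne_iff.mp hξ
    exact Finset.sum_pos' (fun i _ => Complex.normSq_nonneg _)
      ⟨α, Finset.mem_univ α, by simpa [Complex.normSq_pos] using hα⟩
  have hs0 : (0 : ℝ) < 1 + nsq z := by have := nsq_nonneg z; linarith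
  have ht : ((nsq ξ : ℝ) : ℂ) ≠ 0 := Complex.ofReal_ne_zero.mpr (ne_of_gt ht0)
  have hs : ((1 + nsq z : ℝ) : ℂ) ≠ 0 := Complex.ofReal_ne_zero.mpr (ne_of_gt hs0)
  have hapC : ((a + p : ℝ) : ℂ) ≠ 0 := Complex.ofReal_ne_zero.mpr hap
  have hpC : ((p : ℝ) : ℂ) ≠ 0 := Complex.ofReal_ne_zero.mpr hp
  rw [decomp, ← DW_eq_U m l z ξ a p hapC hpC,
    show Dmat m l z ξ a p + Dmat m l z ξ a p * Wmat m l z ξ a p * Vmat m l z ξ a p q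
        = Dmat m l z ξ a p * (1 + Wmat m l z ξ a p * Vmat m l z ξ a p q) by
      rw [Matrix.mul_add, Matrix.mul_one, Matrix.mul_assoc],
    Matrix.det_mul, det_D, Matrix.det_one_add_mul_comm,
    det_one_add_VW m l z ξ a p q ht hapC hpC]
  have e1 : (((1 + nsq z) * nsq ξ : ℝ) : ℂ) ^ (-((l : ℤ) + 1))
      = ((((1 + nsq z : ℝ) : ℂ) * ((nsq ξ : ℝ) : ℂ)) ^ (l + 1))⁻¹ := by
    rw [show (-((l : ℤ) + 1)) = -((l + 1 : ℕ) : ℤ) by push_cast; ring, _root_.zpow_neg,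
      zpow_natCast, Complex.ofReal_mul]
  have e2 : ((1 + nsq z : ℝ) : ℂ) ^ (-((m : ℤ) - l))
      = ((1 + nsq z : ℝ) : ℂ) ^ l * (((1 + nsq z : ℝ) : ℂ) ^ m)⁻¹ := by
    rw [show -((m : ℤ) - l) = (l : ℤ) + (-(m : ℤ)) by ring, zpow_add₀ hs, _root_.zpow_neg,
      zpow_natCast, zpow_natCast]
  rw [e1, e2]
  generalize ((1 + nsq z : ℝ) : ℂ) = S at hs ⊢
  generalize ((nsq ξ : ℝ) : ℂ) = T at ht ⊢
  generalize ((a + p : ℝ) : ℂ) = A at hapC ⊢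
  generalize ((p : ℝ) : ℂ) = P at hpC ⊢
  field_simp
  have h1 : S ^ m * S⁻¹ ^ m = 1 := by rw [← mul_pow, mul_inv_cancel₀ hs, one_pow]
  have h2 : T * T⁻¹ = 1 := mul_inv_cancel₀ ht
  have h3 : T ^ l * T⁻¹ ^ l = 1 := by rw [← mul_pow, mul_inv_cancel₀ ht, one_pow]
  linear_combination (A ^ m * S * S ^ l * P * P ^ l * (q : ℂ) * (T * T⁻¹) * (T ^ l * T⁻¹ ^ l)) * h1
    + (A ^ m * S * S ^ l * P * P ^ l * (q : ℂ) * (T ^ l * T⁻¹ ^ l)) * h2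
    + (A ^ m * S * S ^ l * P * P ^ l * (q : ℂ)) * h3

end myaux

/-- The Calabi-ansatz volume formula underlying Lemma 2.6 and the Monge–Ampère
reduction (5.6): `det((a+p)(Θ₋⊕0) + p(0⊕Θ₊) + q·v vᴴ)
 = (a+p)^m p^l q ((1+|z|²)|ξ|²)^{-(l+1)} (1+|z|²)^{-(m-l)}`. -/
theorem stmt4 (m l : ℕ) (hm : 1 ≤ m) (z : Fin m → ℂ) (ξ : Fin (l + 1) → ℂ)
    (hξ : ξ ≠ 0) (a p q : ℝ) :
    (((a + p : ℝ) : ℂ) • dsum (ThetaMinus m z) (0 : Matrix (Fin (l + 1)) (Fin (l + 1)) ℂ)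
        + ((p : ℝ) : ℂ) • dsum (0 : Matrix (Fin m) (Fin m) ℂ) (ThetaPlus l ξ)
        + ((q : ℝ) : ℂ) • Matrix.vecMulVec (vradial m l z ξ) (star (vradial m l z ξ))).det
      = ((a + p : ℝ) : ℂ) ^ m * ((p : ℝ) : ℂ) ^ l * ((q : ℝ) : ℂ)
        * (((1 + nsq z) * nsq ξ : ℝ) : ℂ) ^ (-((l : ℤ) + 1))
        * ((1 + nsq z : ℝ) : ℂ) ^ (-((m : ℤ) - l)) := by
  let F : ℝ → ℂ := fun r =>
    (((a + r : ℝ) : ℂ) • dsum (ThetaMinus m z) (0 : Matrix (Fin (l + 1)) (Fin (l + 1)) ℂ)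
        + ((r : ℝ) : ℂ) • dsum (0 : Matrix (Fin m) (Fin m) ℂ) (ThetaPlus l ξ)
        + ((q : ℝ) : ℂ) • Matrix.vecMulVec (vradial m l z ξ) (star (vradial m l z ξ))).det
  let G : ℝ → ℂ := fun r =>
    ((a + r : ℝ) : ℂ) ^ m * ((r : ℝ) : ℂ) ^ l * ((q : ℝ) : ℂ)
      * (((1 + nsq z) * nsq ξ : ℝ) : ℂ) ^ (-((l : ℤ) + 1))
      * ((1 + nsq z : ℝ) : ℂ) ^ (-((m : ℤ) - l))
  have hF : Continuous F := by
    apply Continuous.matrix_det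
    apply Continuous.add
    apply Continuous.add
    · exact ((Complex.continuous_ofReal.comp (continuous_const.add continuous_id)).smul
        continuous_const)
    · exact (Complex.continuous_ofReal.smul continuous_const)
    · exact continuous_const
  have h1 : Continuous fun r : ℝ => ((a + r : ℝ) : ℂ) :=
    Complex.continuous_ofReal.comp (continuous_const.add continuous_id)
  have hG : Continuous G :=
    ((((h1.pow m).mul (Complex.continuous_ofReal.pow l)).mul continuous_const).mul
      continuous_const).mul continuous_const
  have hd : Dense (({0, -a} : Set ℝ)ᶜ) :=
    Set.Countable.dense_compl ℝ ((Set.toFinite _).countable)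
  have heq : Set.EqOn F G (({0, -a} : Set ℝ)ᶜ) := by
    intro r hr
    simp only [Set.mem_compl_iff, Set.mem_insert_iff, Set.mem_singleton_iff, not_or] at hr
    exact stmt4_main m l z ξ hξ a r q hr.1 (by intro h; exact hr.2 (by linarith))
  exact congrFun (hF.ext_on hd hG heq) p
end

section
/- For all z ∈ ℂ^m and ξ ∈ ℂ^{l+1}: (1+|z|²)|ξ|² · (Θ₋(z) ⊕ 0) ≤ M̂(z,ξ) in the Loewner order, and for ξ ≠ 0 also (1+|z|²)|ξ|² · (0 ⊕ Θ₊(ξ)) ≤ M̂(z,ξ). Consequently, whenever 0 < e^ρ := (1+|z|²)|ξ|² ≤ 1 and ξ ≠ 0, one has M̂ ≤ M̂ + Θ₋(z) ⊕ 0 ≤ 2 e^{-ρ} M̂ and M̂ ≤ M̂ + 0 ⊕ Θ₊(ξ) ≤ 2 e^{-ρ} M̂. -/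
open Matrix
open scoped ComplexOrder

namespace L25

lemma nsq_nonneg {k : ℕ} (v : Fin k → ℂ) : 0 ≤ nsq v :=
  Finset.sum_nonneg fun _ _ => Complex.normSq_nonneg _

lemma cs {k : ℕ} (z u : Fin k → ℂ) :
    ‖∑ i, z i * u i‖ ^ 2 ≤ nsq z * nsq u := by
  have h1 : ‖∑ i, z i * u i‖ ≤ ∑ i, ‖z i‖ * ‖u i‖ := by
    refine (norm_sum_le _ _).trans_eq ?_
    exact Finset.sum_congr rfl fun i _ => norm_mul _ _
  have h2 := Finset.sum_mul_sq_le_sq_mul_sq Finset.univ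
    (fun i => ‖z i‖) (fun i => ‖u i‖)
  have h3 : ‖∑ i, z i * u i‖ ^ 2 ≤ (∑ i, ‖z i‖ * ‖u i‖) ^ 2 :=
    pow_le_pow_left₀ (norm_nonneg _) h1 2
  refine h3.trans (h2.trans_eq ?_)
  simp [nsq, Complex.sq_norm]

lemma quad_fromBlocks {k k' : ℕ} (A : Matrix (Fin k) (Fin k) ℂ) (B : Matrix (Fin k) (Fin k') ℂ)
    (C : Matrix (Fin k') (Fin k) ℂ) (D : Matrix (Fin k') (Fin k') ℂ) (x : Fin k ⊕ Fin k' → ℂ) :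
    star x ⬝ᵥ (fromBlocks A B C D *ᵥ x)
      = (star (x ∘ Sum.inl) ⬝ᵥ (A *ᵥ (x ∘ Sum.inl)) + star (x ∘ Sum.inl) ⬝ᵥ (B *ᵥ (x ∘ Sum.inr)))
        + (star (x ∘ Sum.inr) ⬝ᵥ (C *ᵥ (x ∘ Sum.inl))
            + star (x ∘ Sum.inr) ⬝ᵥ (D *ᵥ (x ∘ Sum.inr))) := by
  have hs : star x = Sum.elim (star (x ∘ Sum.inl)) (star (x ∘ Sum.inr)) := by
    funext i; cases i <;> rfl
  rw [fromBlocks_mulVec, hs, sumElim_dotProduct_sumElim, dotProduct_add, dotProduct_add]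

lemma dot_smul_one {k : ℕ} (c : ℝ) (u : Fin k → ℂ) :
    star u ⬝ᵥ ((((c : ℝ) : ℂ) • (1 : Matrix (Fin k) (Fin k) ℂ)) *ᵥ u) = ((c * nsq u : ℝ) : ℂ) := by
  rw [smul_mulVec, one_mulVec, dotProduct_smul]
  have : star u ⬝ᵥ u = ((nsq u : ℝ) : ℂ) := by
    simp only [dotProduct, Pi.star_apply, nsq]
    push_cast
    refine Finset.sum_congr rfl fun i _ => ?_
    rw [← Complex.mul_conj, mul_comm]; rfl
  rw [this, smul_eq_mul]; push_cast; ring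

lemma dot_B {m l : ℕ} (z : Fin m → ℂ) (ξ : Fin (l + 1) → ℂ) (u : Fin m → ℂ)
    (v : Fin (l + 1) → ℂ) :
    star u ⬝ᵥ (Bmat m l z ξ *ᵥ v)
      = (starRingEnd ℂ) (∑ i, z i * u i) * (∑ α, ξ α * v α) := by
  simp only [dotProduct, mulVec, Bmat, Pi.star_apply, map_sum, _root_.map_mul, Finset.sum_mul,
    Finset.mul_sum, Complex.star_def]
  rw [Finset.sum_comm]
  refine Finset.sum_congr rfl fun i _ => Finset.sum_congr rfl fun α _ => by ring

lemma dot_BH {m l : ℕ} (z : Fin m → ℂ) (ξ : Fin (l + 1) → ℂ) (u : Fin m → ℂ)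
    (v : Fin (l + 1) → ℂ) :
    star v ⬝ᵥ ((Bmat m l z ξ)ᴴ *ᵥ u)
      = (starRingEnd ℂ) (∑ α, ξ α * v α) * (∑ i, z i * u i) := by
  simp only [dotProduct, mulVec, Bmat, conjTranspose_apply, Pi.star_apply, map_sum,
    _root_.map_mul, Finset.sum_mul, Finset.mul_sum, Complex.star_def, Complex.conj_conj]
  rw [Finset.sum_comm]
  refine Finset.sum_congr rfl fun i _ => Finset.sum_congr rfl fun α _ => by ring

lemma rank1_dot {k : ℕ} (z u : Fin k → ℂ) :
    star u ⬝ᵥ (vecMulVec (star z) z *ᵥ u)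
      = ((‖∑ i, z i * u i‖ ^ 2 : ℝ) : ℂ) := by
  have : star u ⬝ᵥ (vecMulVec (star z) z *ᵥ u)
      = (starRingEnd ℂ) (∑ i, z i * u i) * (∑ i, z i * u i) := by
    simp only [dotProduct, mulVec, vecMulVec_apply, Pi.star_apply, map_sum, _root_.map_mul,
      Finset.sum_mul, Finset.mul_sum, Complex.star_def]
    rw [Finset.sum_comm]
    refine Finset.sum_congr rfl fun i _ => Finset.sum_congr rfl fun j _ => by ring
  rw [this, mul_comm, Complex.mul_conj, Complex.sq_norm]

lemma theta_decomp {k : ℕ} (A : ℝ) (z : Fin k → ℂ) :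
    ((fun i j => (if i = j then 1 else 0) / ((A : ℝ) : ℂ)
        - (starRingEnd ℂ) (z i) * z j / ((A : ℝ) : ℂ) ^ 2) : Matrix (Fin k) (Fin k) ℂ)
      = (((A : ℝ) : ℂ))⁻¹ • (1 : Matrix (Fin k) (Fin k) ℂ)
        - ((((A : ℝ) : ℂ)) ^ 2)⁻¹ • vecMulVec (star z) z := by
  ext i j
  by_cases h : i = j <;>
    simp [h, Matrix.one_apply, vecMulVec_apply, div_eq_inv_mul, Matrix.sub_apply, Complex.star_def,
      mul_comm]

lemma dot_theta {k : ℕ} (A : ℝ) (z u : Fin k → ℂ) :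
    star u ⬝ᵥ (((fun i j => (if i = j then 1 else 0) / ((A : ℝ) : ℂ)
        - (starRingEnd ℂ) (z i) * z j / ((A : ℝ) : ℂ) ^ 2) : Matrix (Fin k) (Fin k) ℂ) *ᵥ u)
      = ((nsq u / A - ‖∑ i, z i * u i‖ ^ 2 / A ^ 2 : ℝ) : ℂ) := by
  rw [theta_decomp, sub_mulVec, dotProduct_sub, smul_mulVec, dotProduct_smul,
    smul_mulVec, dotProduct_smul, smul_eq_mul, smul_eq_mul, one_mulVec, rank1_dot]
  have : star u ⬝ᵥ u = ((nsq u : ℝ) : ℂ) := by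
    simp only [dotProduct, Pi.star_apply, nsq]
    push_cast
    refine Finset.sum_congr rfl fun i _ => ?_
    rw [← Complex.mul_conj, mul_comm]; rfl
  rw [this]
  push_cast
  ring

lemma herm_theta {k : ℕ} (A : ℝ) (z : Fin k → ℂ) :
    Matrix.IsHermitian ((fun i j => (if i = j then 1 else 0) / ((A : ℝ) : ℂ)
        - (starRingEnd ℂ) (z i) * z j / ((A : ℝ) : ℂ) ^ 2) :
      Matrix (Fin k) (Fin k) ℂ) := by
  rw [theta_decomp]
  refine IsHermitian.sub ?_ ?_
  · rw [IsHermitian, conjTranspose_smul, conjTranspose_one, Complex.star_def, ← Complex.ofReal_inv,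
      Complex.conj_ofReal]
  · rw [IsHermitian, conjTranspose_smul, Complex.star_def, ← Complex.ofReal_pow,
      ← Complex.ofReal_inv, Complex.conj_ofReal]
    congr 1
    ext i j
    simp [vecMulVec_apply, conjTranspose_apply, Complex.star_def, mul_comm]

lemma psd_smul {n : Type*} [Fintype n] {M : Matrix n n ℂ} (hM : M.PosSemidef) {c : ℝ}
    (hc : 0 ≤ c) : (((c : ℝ) : ℂ) • M).PosSemidef := by
  refine PosSemidef.of_dotProduct_mulVec_nonneg ?_ ?_
  · rw [IsHermitian, conjTranspose_smul, hM.1.eq, Complex.star_def, Complex.conj_ofReal]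
  · intro x
    rw [smul_mulVec, dotProduct_smul, smul_eq_mul]
    exact mul_nonneg (Complex.zero_le_real.2 hc) (hM.dotProduct_mulVec_nonneg x)


lemma ineq1 (nz b nu nv sA tA r : ℝ) (hnz : 0 ≤ nz) (hb : 0 ≤ b) (hnu : 0 ≤ nu) (hnv : 0 ≤ nv)
    (hsA : 0 ≤ sA) (htA : 0 ≤ tA) (hcsS : sA ^ 2 ≤ nz * nu) (hcsT : tA ^ 2 ≤ b * nv)
    (hr : -(sA * tA) ≤ r) :
    0 ≤ b * nu + (1 + nz) * nv + 2 * r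
      - (1 + nz) * b * (nu / (1 + nz) - sA ^ 2 / (1 + nz) ^ 2) := by
  have ha : (0:ℝ) < 1 + nz := by linarith
  have key : b * nu + (1 + nz) * nv + 2 * r
      - (1 + nz) * b * (nu / (1 + nz) - sA ^ 2 / (1 + nz) ^ 2)
      = ((1 + nz) ^ 2 * nv + 2 * (1 + nz) * r + b * sA ^ 2) / (1 + nz) := by
    field_simp; ring
  rw [key]
  apply div_nonneg _ ha.le
  by_cases hbz : b = 0
  · have htz : tA = 0 := by nlinarith
    have hr' : 0 ≤ r := by rw [htz] at hr; simpa using hr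
    nlinarith [mul_nonneg ha.le hr', mul_nonneg (sq_nonneg (1 + nz)) hnv,
      mul_nonneg hb (sq_nonneg sA)]
  · have hbpos : 0 < b := lt_of_le_of_ne hb (Ne.symm hbz)
    nlinarith [sq_nonneg ((1 + nz) * tA - b * sA),
      mul_le_mul_of_nonneg_left hcsT (sq_nonneg (1 + nz)),
      mul_nonneg (mul_nonneg ha.le hb) (by linarith : (0:ℝ) ≤ r + sA * tA)]

lemma ineq2 (nz b nu nv sA tA r : ℝ) (hnz : 0 ≤ nz) (hb : 0 < b) (hnu : 0 ≤ nu) (hnv : 0 ≤ nv)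
    (hsA : 0 ≤ sA) (htA : 0 ≤ tA) (hcsS : sA ^ 2 ≤ nz * nu) (hcsT : tA ^ 2 ≤ b * nv)
    (hr : -(sA * tA) ≤ r) :
    0 ≤ b * nu + (1 + nz) * nv + 2 * r
      - (1 + nz) * b * (nv / b - tA ^ 2 / b ^ 2) := by
  have ha : (0:ℝ) < 1 + nz := by linarith
  have hcsS' : sA ^ 2 ≤ (1 + nz) * nu := by nlinarith
  have key : b * nu + (1 + nz) * nv + 2 * r - (1 + nz) * b * (nv / b - tA ^ 2 / b ^ 2)
      = (b ^ 2 * nu + 2 * b * r + (1 + nz) * tA ^ 2) / b := by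
    field_simp; ring
  rw [key]
  apply div_nonneg _ hb.le
  nlinarith [sq_nonneg (b * sA - (1 + nz) * tA),
    mul_le_mul_of_nonneg_left hcsS' (sq_nonneg b),
    mul_nonneg (mul_nonneg ha.le hb.le) (by linarith : (0:ℝ) ≤ r + sA * tA)]

lemma ineqM (nz b nu nv sA tA r : ℝ) (hnz : 0 ≤ nz) (hb : 0 ≤ b) (hnu : 0 ≤ nu) (hnv : 0 ≤ nv)
    (hsA : 0 ≤ sA) (htA : 0 ≤ tA) (hcsS : sA ^ 2 ≤ nz * nu) (hcsT : tA ^ 2 ≤ b * nv)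
    (hr : -(sA * tA) ≤ r) :
    0 ≤ b * nu + (1 + nz) * nv + 2 * r := by
  have ha : (0:ℝ) < 1 + nz := by linarith
  have hcsS' : sA ^ 2 ≤ (1 + nz) * nu := by nlinarith
  have hprod : sA ^ 2 * tA ^ 2 ≤ ((1 + nz) * nu) * (b * nv) :=
    mul_le_mul hcsS' hcsT (sq_nonneg tA) (mul_nonneg ha.le hnu)
  have hPQ : 0 ≤ b * nu + (1 + nz) * nv :=
    add_nonneg (mul_nonneg hb hnu) (mul_nonneg ha.le hnv)
  have hxsq : (2 * (sA * tA)) ^ 2 ≤ (b * nu + (1 + nz) * nv) ^ 2 := by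
    nlinarith [sq_nonneg (b * nu - (1 + nz) * nv)]
  have h1 := (abs_le_of_sq_le_sq' hxsq hPQ).2
  linarith

lemma ineq3 (nz nu sA : ℝ) (hnz : 0 ≤ nz) (hnu : 0 ≤ nu) (hcsS : sA ^ 2 ≤ nz * nu) :
    0 ≤ nu / (1 + nz) - sA ^ 2 / (1 + nz) ^ 2 := by
  have ha : (0:ℝ) < 1 + nz := by linarith
  have key : nu / (1 + nz) - sA ^ 2 / (1 + nz) ^ 2
      = ((1 + nz) * nu - sA ^ 2) / (1 + nz) ^ 2 := by field_simp
  rw [key]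
  apply div_nonneg _ (sq_nonneg _)
  nlinarith

lemma ineq4 (b nv tA : ℝ) (hb : 0 < b) (hcsT : tA ^ 2 ≤ b * nv) :
    0 ≤ nv / b - tA ^ 2 / b ^ 2 := by
  have key : nv / b - tA ^ 2 / b ^ 2 = (b * nv - tA ^ 2) / b ^ 2 := by field_simp
  rw [key]
  apply div_nonneg _ (sq_nonneg _)
  linarith


lemma nsq_pos {k : ℕ} {v : Fin k → ℂ} (hv : v ≠ 0) : 0 < nsq v := by
  rcases (nsq_nonneg v).lt_or_eq with h | h
  · exact h
  · exfalso
    apply hv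
    funext i
    have h0 : ∀ i ∈ Finset.univ, Complex.normSq (v i) = 0 := by
      rw [← Finset.sum_eq_zero_iff_of_nonneg (fun i _ => Complex.normSq_nonneg (v i))]
      exact h.symm
    have := h0 i (Finset.mem_univ i)
    simpa [Complex.normSq_eq_zero] using this

lemma qM {m l : ℕ} (z : Fin m → ℂ) (ξ : Fin (l + 1) → ℂ) (x : Fin m ⊕ Fin (l + 1) → ℂ) :
    star x ⬝ᵥ (Mhat m l z ξ *ᵥ x)
      = ((nsq ξ * nsq (x ∘ Sum.inl) + (1 + nsq z) * nsq (x ∘ Sum.inr)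
          + 2 * ((starRingEnd ℂ) (∑ i, z i * (x ∘ Sum.inl) i)
              * (∑ α, ξ α * (x ∘ Sum.inr) α)).re : ℝ) : ℂ) := by
  unfold Mhat
  rw [quad_fromBlocks, dot_smul_one, dot_smul_one, dot_B, dot_BH]
  have h1 : (starRingEnd ℂ) (∑ α, ξ α * (x ∘ Sum.inr) α) * (∑ i, z i * (x ∘ Sum.inl) i)
      = (starRingEnd ℂ) ((starRingEnd ℂ) (∑ i, z i * (x ∘ Sum.inl) i)
          * (∑ α, ξ α * (x ∘ Sum.inr) α)) := by
    rw [_root_.map_mul, Complex.conj_conj]; ring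
  rw [h1]
  have h2 := Complex.add_conj ((starRingEnd ℂ) (∑ i, z i * (x ∘ Sum.inl) i)
      * (∑ α, ξ α * (x ∘ Sum.inr) α))
  push_cast at h2 ⊢
  linear_combination h2

lemma qDm {m l : ℕ} (z : Fin m → ℂ) (x : Fin m ⊕ Fin (l + 1) → ℂ) :
    star x ⬝ᵥ (dsum (ThetaMinus m z) (0 : Matrix (Fin (l + 1)) (Fin (l + 1)) ℂ) *ᵥ x)
      = ((nsq (x ∘ Sum.inl) / (1 + nsq z)
          - ‖∑ i, z i * (x ∘ Sum.inl) i‖ ^ 2 / (1 + nsq z) ^ 2 : ℝ) : ℂ) := by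
  have h : star (x ∘ Sum.inl) ⬝ᵥ (ThetaMinus m z *ᵥ (x ∘ Sum.inl)) = _ :=
    dot_theta (1 + nsq z) z (x ∘ Sum.inl)
  unfold dsum
  rw [quad_fromBlocks, zero_mulVec, dotProduct_zero, zero_mulVec, dotProduct_zero,
    zero_mulVec, dotProduct_zero, h]
  ring

lemma qDp {m l : ℕ} (ξ : Fin (l + 1) → ℂ) (x : Fin m ⊕ Fin (l + 1) → ℂ) :
    star x ⬝ᵥ (dsum (0 : Matrix (Fin m) (Fin m) ℂ) (ThetaPlus l ξ) *ᵥ x)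
      = ((nsq (x ∘ Sum.inr) / nsq ξ
          - ‖∑ α, ξ α * (x ∘ Sum.inr) α‖ ^ 2 / nsq ξ ^ 2 : ℝ) : ℂ) := by
  have h : star (x ∘ Sum.inr) ⬝ᵥ (ThetaPlus l ξ *ᵥ (x ∘ Sum.inr)) = _ :=
    dot_theta (nsq ξ) ξ (x ∘ Sum.inr)
  unfold dsum
  rw [quad_fromBlocks, zero_mulVec, dotProduct_zero, zero_mulVec, dotProduct_zero,
    zero_mulVec, dotProduct_zero, h]
  ring

lemma hermM {m l : ℕ} (z : Fin m → ℂ) (ξ : Fin (l + 1) → ℂ) : (Mhat m l z ξ).IsHermitian := by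
  unfold Mhat
  show _ᴴ = _
  simp only [fromBlocks_conjTranspose, conjTranspose_conjTranspose, conjTranspose_smul,
    conjTranspose_one, Complex.star_def, Complex.conj_ofReal]

lemma hermDm {m l : ℕ} (z : Fin m → ℂ) :
    (dsum (ThetaMinus m z) (0 : Matrix (Fin (l + 1)) (Fin (l + 1)) ℂ)).IsHermitian := by
  have hP : (ThetaMinus m z)ᴴ = ThetaMinus m z := herm_theta (1 + nsq z) z
  unfold dsum
  show _ᴴ = _
  simp only [fromBlocks_conjTranspose, conjTranspose_zero, hP]

lemma hermDp {m l : ℕ} (ξ : Fin (l + 1) → ℂ) :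
    (dsum (0 : Matrix (Fin m) (Fin m) ℂ) (ThetaPlus l ξ)).IsHermitian := by
  have hP : (ThetaPlus l ξ)ᴴ = ThetaPlus l ξ := herm_theta (nsq ξ) ξ
  unfold dsum
  show _ᴴ = _
  simp only [fromBlocks_conjTranspose, conjTranspose_zero, hP]

lemma re_bound {m l : ℕ} (z : Fin m → ℂ) (ξ : Fin (l + 1) → ℂ) (x : Fin m ⊕ Fin (l + 1) → ℂ) :
    -(‖∑ i, z i * (x ∘ Sum.inl) i‖ * ‖∑ α, ξ α * (x ∘ Sum.inr) α‖)
      ≤ ((starRingEnd ℂ) (∑ i, z i * (x ∘ Sum.inl) i) * (∑ α, ξ α * (x ∘ Sum.inr) α)).re := by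
  have habs : |((starRingEnd ℂ) (∑ i, z i * (x ∘ Sum.inl) i)
        * (∑ α, ξ α * (x ∘ Sum.inr) α)).re|
      ≤ ‖∑ i, z i * (x ∘ Sum.inl) i‖ * ‖∑ α, ξ α * (x ∘ Sum.inr) α‖ := by
    refine (Complex.abs_re_le_norm _).trans_eq ?_
    rw [norm_mul, Complex.norm_conj]
  exact (abs_le.1 habs).1

lemma psdM {m l : ℕ} (z : Fin m → ℂ) (ξ : Fin (l + 1) → ℂ) : (Mhat m l z ξ).PosSemidef := by
  refine PosSemidef.of_dotProduct_mulVec_nonneg (hermM z ξ) fun x => ?_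
  rw [qM, Complex.zero_le_real]
  exact ineqM _ _ _ _ _ _ _ (nsq_nonneg z) (nsq_nonneg ξ) (nsq_nonneg _) (nsq_nonneg _)
    (norm_nonneg _) (norm_nonneg _) (cs z (x ∘ Sum.inl)) (cs ξ (x ∘ Sum.inr))
    (re_bound z ξ x)

lemma psd1 {m l : ℕ} (z : Fin m → ℂ) (ξ : Fin (l + 1) → ℂ) :
    (Mhat m l z ξ - (((1 + nsq z) * nsq ξ : ℝ) : ℂ) •
        dsum (ThetaMinus m z) (0 : Matrix (Fin (l + 1)) (Fin (l + 1)) ℂ)).PosSemidef := by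
  refine PosSemidef.of_dotProduct_mulVec_nonneg ?_ ?_
  · refine (hermM z ξ).sub ?_
    rw [IsHermitian, conjTranspose_smul, (hermDm z).eq, Complex.star_def, Complex.conj_ofReal]
  · intro x
    rw [sub_mulVec, dotProduct_sub, smul_mulVec, dotProduct_smul, qM, qDm, smul_eq_mul,
      ← Complex.ofReal_mul, ← Complex.ofReal_sub, Complex.zero_le_real]
    exact ineq1 _ _ _ _ _ _ _ (nsq_nonneg z) (nsq_nonneg ξ) (nsq_nonneg _) (nsq_nonneg _)
      (norm_nonneg _) (norm_nonneg _) (cs z (x ∘ Sum.inl)) (cs ξ (x ∘ Sum.inr))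
      (re_bound z ξ x)

lemma psd2 {m l : ℕ} (z : Fin m → ℂ) (ξ : Fin (l + 1) → ℂ) (hξ : ξ ≠ 0) :
    (Mhat m l z ξ - (((1 + nsq z) * nsq ξ : ℝ) : ℂ) •
        dsum (0 : Matrix (Fin m) (Fin m) ℂ) (ThetaPlus l ξ)).PosSemidef := by
  refine PosSemidef.of_dotProduct_mulVec_nonneg ?_ ?_
  · refine (hermM z ξ).sub ?_
    rw [IsHermitian, conjTranspose_smul, (hermDp ξ).eq, Complex.star_def, Complex.conj_ofReal]
  · intro x
    rw [sub_mulVec, dotProduct_sub, smul_mulVec, dotProduct_smul, qM, qDp, smul_eq_mul,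
      ← Complex.ofReal_mul, ← Complex.ofReal_sub, Complex.zero_le_real]
    exact ineq2 _ _ _ _ _ _ _ (nsq_nonneg z) (nsq_pos hξ) (nsq_nonneg _) (nsq_nonneg _)
      (norm_nonneg _) (norm_nonneg _) (cs z (x ∘ Sum.inl)) (cs ξ (x ∘ Sum.inr))
      (re_bound z ξ x)

lemma psd3 {m l : ℕ} (z : Fin m → ℂ) :
    (dsum (ThetaMinus m z) (0 : Matrix (Fin (l + 1)) (Fin (l + 1)) ℂ)).PosSemidef := by
  refine PosSemidef.of_dotProduct_mulVec_nonneg (hermDm z) fun x => ?_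
  rw [qDm, Complex.zero_le_real]
  exact ineq3 _ _ _ (nsq_nonneg z) (nsq_nonneg _) (cs z (x ∘ Sum.inl))

lemma psd4 {m l : ℕ} (ξ : Fin (l + 1) → ℂ) (hξ : ξ ≠ 0) :
    (dsum (0 : Matrix (Fin m) (Fin m) ℂ) (ThetaPlus l ξ)).PosSemidef := by
  refine PosSemidef.of_dotProduct_mulVec_nonneg (hermDp ξ) fun x => ?_
  rw [qDp, Complex.zero_le_real]
  exact ineq4 _ _ _ (nsq_pos hξ) (cs ξ (x ∘ Sum.inr))

end L25

/-- Lemma 2.5(1): in the Loewner order, `e^ρ·(Θ₋⊕0) ≤ M̂` and (for `ξ ≠ 0`)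
`e^ρ·(0⊕Θ₊) ≤ M̂`; consequently on the region `0 < e^ρ ≤ 1` one has
`M̂ ≤ M̂ + Θ₋⊕0 ≤ 2e^{-ρ}M̂` and `M̂ ≤ M̂ + 0⊕Θ₊ ≤ 2e^{-ρ}M̂`. -/
theorem stmt5 (m l : ℕ) (hm : 1 ≤ m) (z : Fin m → ℂ) (ξ : Fin (l + 1) → ℂ) :
    (Mhat m l z ξ - (((1 + nsq z) * nsq ξ : ℝ) : ℂ) •
        dsum (ThetaMinus m z) (0 : Matrix (Fin (l + 1)) (Fin (l + 1)) ℂ)).PosSemidef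
    ∧ (ξ ≠ 0 →
        (Mhat m l z ξ - (((1 + nsq z) * nsq ξ : ℝ) : ℂ) •
          dsum (0 : Matrix (Fin m) (Fin m) ℂ) (ThetaPlus l ξ)).PosSemidef)
    ∧ (0 < (1 + nsq z) * nsq ξ → (1 + nsq z) * nsq ξ ≤ 1 → ξ ≠ 0 →
        (Mhat m l z ξ + dsum (ThetaMinus m z) (0 : Matrix (Fin (l + 1)) (Fin (l + 1)) ℂ)
            - Mhat m l z ξ).PosSemidef
        ∧ (((2 * ((1 + nsq z) * nsq ξ)⁻¹ : ℝ) : ℂ) • Mhat m l z ξ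
            - (Mhat m l z ξ +
                dsum (ThetaMinus m z) (0 : Matrix (Fin (l + 1)) (Fin (l + 1)) ℂ))).PosSemidef
        ∧ (Mhat m l z ξ + dsum (0 : Matrix (Fin m) (Fin m) ℂ) (ThetaPlus l ξ)
            - Mhat m l z ξ).PosSemidef
        ∧ (((2 * ((1 + nsq z) * nsq ξ)⁻¹ : ℝ) : ℂ) • Mhat m l z ξ
            - (Mhat m l z ξ +
                dsum (0 : Matrix (Fin m) (Fin m) ℂ) (ThetaPlus l ξ))).PosSemidef) := by
  refine ⟨L25.psd1 z ξ, fun hξ => L25.psd2 z ξ hξ, fun hc hc1 hξ => ?_⟩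
  have hcinv : (0:ℝ) ≤ ((1 + nsq z) * nsq ξ)⁻¹ - 1 := by
    have h1 : (1:ℝ) ≤ ((1 + nsq z) * nsq ξ)⁻¹ := (one_le_inv₀ hc).mpr hc1
    linarith
  have hcinv0 : (0:ℝ) ≤ ((1 + nsq z) * nsq ξ)⁻¹ := inv_nonneg.mpr hc.le
  have hccne : ((1 + nsq z) * nsq ξ : ℝ) ≠ 0 := hc.ne'
  have hEq : ∀ D : Matrix (Fin m ⊕ Fin (l + 1)) (Fin m ⊕ Fin (l + 1)) ℂ,
      ((2 * ((1 + nsq z) * nsq ξ)⁻¹ : ℝ) : ℂ) • Mhat m l z ξ - (Mhat m l z ξ + D)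
        = (((((1 + nsq z) * nsq ξ)⁻¹ - 1 : ℝ)) : ℂ) • Mhat m l z ξ
          + ((((1 + nsq z) * nsq ξ)⁻¹ : ℝ) : ℂ) •
              (Mhat m l z ξ - (((1 + nsq z) * nsq ξ : ℝ) : ℂ) • D) := by
    intro D
    have hcc : ((((1 + nsq z) * nsq ξ)⁻¹ : ℝ) : ℂ) * (((1 + nsq z) * nsq ξ : ℝ) : ℂ) = 1 := by
      rw [← Complex.ofReal_mul, inv_mul_cancel₀ hccne, Complex.ofReal_one]
    ext i j
    simp only [Matrix.sub_apply, Matrix.add_apply, Matrix.smul_apply, smul_eq_mul]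
    rw [Complex.ofReal_mul, Complex.ofReal_sub, Complex.ofReal_one, Complex.ofReal_ofNat]
    linear_combination (D i j) * hcc
  refine ⟨?_, ?_, ?_, ?_⟩
  · rw [add_sub_cancel_left]; exact L25.psd3 z
  · rw [hEq]
    exact (L25.psd_smul (L25.psdM z ξ) hcinv).add (L25.psd_smul (L25.psd1 z ξ) hcinv0)
  · rw [add_sub_cancel_left]; exact L25.psd4 ξ hξ
  · rw [hEq]
    exact (L25.psd_smul (L25.psdM z ξ) hcinv).add (L25.psd_smul (L25.psd2 z ξ hξ) hcinv0)
end

section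
/- Let l ≥ 1 and m ≥ 1 be integers and let p, q, κ be positive real numbers and r, s real numbers. Assume r/q = q/p and s/q ≤ r/p. Then (1/q)·( s/q − r²/q² + l·r/p − l·q²/p² + m·r/(κ+p) − m·q²/(κ+p)² ) − (1/p)·( r/q + l·q/p + m·q/(κ+p) − (l+1) ) ≤ ((l+1)/p)·(1 − q/p). -/
/-- The pointwise algebraic inequality at an interior maximum in the
maximum-principle argument of Proposition 5.4: with `p = u'`, `q = u''`,
`r = u'''`, `s = u⁗`, `κ > 0`, if `r/q = q/p` (i.e. `H' = 0`) and `s/q ≤ r/p`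
(i.e. `H'' ≤ 0`), then `∂H/∂t ≤ ((l+1)/p)(1 − q/p)`. -/
theorem stmt9 (l m : ℕ) (hl : 1 ≤ l) (hm : 1 ≤ m)
    (p q κ : ℝ) (hp : 0 < p) (hq : 0 < q) (hκ : 0 < κ) (r s : ℝ)
    (h1 : r / q = q / p) (h2 : s / q ≤ r / p) :
    (1 / q) * (s / q - r ^ 2 / q ^ 2 + l * r / p - l * q ^ 2 / p ^ 2
        + m * r / (κ + p) - m * q ^ 2 / (κ + p) ^ 2)
      - (1 / p) * (r / q + l * q / p + m * q / (κ + p) - (l + 1))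
    ≤ ((l + 1) / p) * (1 - q / p) := by
  have hP : 0 < κ + p := by linarith
  have hr : r = q ^ 2 / p := by
    field_simp at h1 ⊢
    nlinarith [h1]
  subst hr
  have hs : s * p ^ 2 ≤ q ^ 3 := by
    rw [div_div] at h2
    have := (div_le_div_iff₀ hq (by positivity : (0:ℝ) < p * p)).mp h2
    nlinarith [this]
  rw [← sub_nonneg]
  have heq : ((l:ℝ) + 1) / p * (1 - q / p) -
      ((1 / q) * (s / q - (q ^ 2 / p) ^ 2 / q ^ 2 + l * (q ^ 2 / p) / p - l * q ^ 2 / p ^ 2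
        + m * (q ^ 2 / p) / (κ + p) - m * q ^ 2 / (κ + p) ^ 2)
      - (1 / p) * ((q ^ 2 / p) / q + l * q / p + m * q / (κ + p) - (l + 1)))
      = (q ^ 3 - s * p ^ 2) / (q ^ 2 * p ^ 2) + m * q / (κ + p) ^ 2 := by
    field_simp
    ring
  rw [heq]
  have h3 : (0:ℝ) ≤ (q ^ 3 - s * p ^ 2) / (q ^ 2 * p ^ 2) := div_nonneg (by linarith) (by positivity)
  have h4 : (0:ℝ) ≤ (m:ℝ) * q / (κ + p) ^ 2 := by positivity
  linarith
end

section
/- For all z ∈ ℂ^m and ξ ∈ ℂ^{l+1} with ξ ≠ 0, det( (Θ₋(z) ⊕ Θ₊(ξ)) + M̂(z,ξ) ) = ((1+|z|²)|ξ|²)^{-l} · (1 + (1+|z|²)|ξ|²)^{m+l} · (1+|z|²)^{-(m-l)}. -/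
open Matrix
open scoped ComplexOrder

lemma vecMulVec_mul_vecMulVec {m n k : Type*} [Fintype n] {x : m → ℂ} {y : n → ℂ}
    {w : n → ℂ} {v : k → ℂ} :
    vecMulVec x y * vecMulVec w v = (y ⬝ᵥ w) • vecMulVec x v := by
  ext i j
  simp only [mul_apply, vecMulVec_apply, Matrix.smul_apply, smul_eq_mul, dotProduct, Finset.sum_mul]
  congr 1; ext t; ring

lemma det_smul_one_add_vecMulVec {k : ℕ} (c : ℂ) (hc : c ≠ 0) (x y : Fin k → ℂ) :
    (c • (1 : Matrix (Fin k) (Fin k) ℂ) + vecMulVec x y).det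
      = c ^ k * (1 + c⁻¹ * (y ⬝ᵥ x)) := by
  have h : c • (1 : Matrix (Fin k) (Fin k) ℂ) + vecMulVec x y
      = c • (1 + vecMulVec (c⁻¹ • x) y) := by
    rw [smul_add]
    congr 1
    ext i j
    simp only [Matrix.smul_apply, vecMulVec_apply, Pi.smul_apply, smul_eq_mul]
    field_simp
  rw [h, det_smul, Fintype.card_fin, vecMulVec_eq Unit, det_one_add_replicateCol_mul_replicateRow,
    dotProduct_smul]
  simp [smul_eq_mul]

set_option maxHeartbeats 1600000 in
/-- The volume-form identity of Lemma 2.6 for `ω̃ = θ₋ + θ₊ + ω̂`: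
`det((Θ₋ ⊕ Θ₊) + M̂) = ((1+|z|²)|ξ|²)^{-l} (1 + (1+|z|²)|ξ|²)^{m+l} (1+|z|²)^{-(m-l)}`. -/
theorem stmt14 (m l : ℕ) (hm : 1 ≤ m) (z : Fin m → ℂ) (ξ : Fin (l + 1) → ℂ)
    (hξ : ξ ≠ 0) :
    (dsum (ThetaMinus m z) (ThetaPlus l ξ) + Mhat m l z ξ).det =
      (((1 + nsq z) * nsq ξ : ℝ) : ℂ) ^ (-(l : ℤ))
        * ((1 + (1 + nsq z) * nsq ξ : ℝ) : ℂ) ^ (m + l)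
        * ((1 + nsq z : ℝ) : ℂ) ^ (-((m : ℤ) - l)) := by
  classical
  set a : ℂ := ((1 + nsq z : ℝ) : ℂ) with ha_def
  set b : ℂ := ((nsq ξ : ℝ) : ℂ) with hb_def
  -- positivity
  have hnz : 0 ≤ nsq z := Finset.sum_nonneg fun i _ => Complex.normSq_nonneg _
  have hbR : 0 < nsq ξ := by
    obtain ⟨α, hα⟩ : ∃ α, ξ α ≠ 0 := by
      by_contra h
      push_neg at h
      exact hξ (funext h)
    exact Finset.sum_pos' (fun i _ => Complex.normSq_nonneg _)
      ⟨α, Finset.mem_univ _, by simpa [Complex.normSq_pos] using hα⟩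
  have haR : 0 < 1 + nsq z := by linarith
  have ha : a ≠ 0 := by simp [ha_def, Complex.ofReal_ne_zero]; positivity
  have hb : b ≠ 0 := by simp [hb_def, Complex.ofReal_ne_zero]; exact ne_of_gt hbR
  have hs : a * b + 1 ≠ 0 := by
    rw [ha_def, hb_def]
    rw [← Complex.ofReal_mul, ← Complex.ofReal_one, ← Complex.ofReal_add,
      Complex.ofReal_ne_zero]
    positivity
  -- the vectors
  set u : Fin m → ℂ := fun i => (starRingEnd ℂ) (z i) with hu
  set w : Fin (l + 1) → ℂ := fun α => (starRingEnd ℂ) (ξ α) with hw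
  have hzu : z ⬝ᵥ u = a - 1 := by
    simp only [dotProduct, hu, ha_def]
    push_cast
    rw [add_sub_cancel_left]
    rw [nsq, Complex.ofReal_sum]
    congr 1; ext i
    exact Complex.mul_conj _
  have hξw : ξ ⬝ᵥ w = b := by
    simp only [dotProduct, hw, hb_def]
    rw [nsq, Complex.ofReal_sum]
    congr 1; ext α
    exact Complex.mul_conj _
  -- block matrices
  set A1 : Matrix (Fin m) (Fin m) ℂ :=
    (b + a⁻¹) • 1 + vecMulVec ((-(a ^ 2)⁻¹) • u) z with hA1
  set D1 : Matrix (Fin (l + 1)) (Fin (l + 1)) ℂ :=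
    (a + b⁻¹) • 1 + vecMulVec ((-(b ^ 2)⁻¹) • w) ξ with hD1
  have hM : dsum (ThetaMinus m z) (ThetaPlus l ξ) + Mhat m l z ξ
      = fromBlocks A1 (vecMulVec u ξ) (vecMulVec w z) D1 := by
    ext i j
    cases i <;> cases j
    · simp only [dsum, Mhat, ThetaMinus, ThetaPlus, Bmat, hA1, hD1, Matrix.add_apply,
        fromBlocks_apply₁₁, Matrix.smul_apply, Matrix.one_apply, vecMulVec_apply,
        Pi.smul_apply, smul_eq_mul, hu, ← ha_def, ← hb_def]
      split_ifs <;> (field_simp; try ring)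
    · simp [dsum, Mhat, Bmat, vecMulVec_apply, hu]
    · simp only [dsum, Mhat, Bmat, Matrix.add_apply, fromBlocks_apply₂₁,
        Matrix.zero_apply, conjTranspose_apply, vecMulVec_apply, hu, hw, zero_add,
        star_mul', Complex.star_def, Complex.conj_conj]
      ring
    · simp only [dsum, Mhat, ThetaMinus, ThetaPlus, Bmat, hA1, hD1, Matrix.add_apply,
        fromBlocks_apply₂₂, Matrix.smul_apply, Matrix.one_apply, vecMulVec_apply,
        Pi.smul_apply, smul_eq_mul, hw, ← ha_def, ← hb_def]
      split_ifs <;> (field_simp; try ring)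
  rw [hM]
  -- invertibility of D1
  have hc'b : (a + b⁻¹) * b = a * b + 1 := by field_simp
  have hc' : a + b⁻¹ ≠ 0 := by
    intro h
    exact hs (by rw [← hc'b, h, zero_mul])
  have hc2a : (b + a⁻¹) * a = a * b + 1 := by field_simp
  have hc2 : b + a⁻¹ ≠ 0 := by
    intro h
    exact hs (by rw [← hc2a, h, zero_mul])
  have hξx : ξ ⬝ᵥ ((-(b ^ 2)⁻¹) • w) = -b⁻¹ := by
    rw [dotProduct_smul, hξw, smul_eq_mul]
    field_simp
  have hdetD : D1.det = (a + b⁻¹) ^ (l + 1) * (1 + (a + b⁻¹)⁻¹ * (-b⁻¹)) := by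
    rw [hD1, det_smul_one_add_vecMulVec _ hc', hξx]
  have hfacD : 1 + (a + b⁻¹)⁻¹ * (-b⁻¹) = a * b / (a * b + 1) := by
    rw [eq_div_iff hs, ← hc'b]
    field_simp
    ring
  have hDdet_ne : D1.det ≠ 0 := by
    rw [hdetD, hfacD]
    exact mul_ne_zero (pow_ne_zero _ hc') (div_ne_zero (mul_ne_zero ha hb) hs)
  haveI : Invertible D1 := D1.invertibleOfIsUnitDet (Ne.isUnit hDdet_ne)
  rw [det_fromBlocks₂₂]
  -- compute the Schur complement
  have hDV : D1 * vecMulVec w z = a • vecMulVec w z := by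
    rw [hD1, Matrix.add_mul, Matrix.smul_mul, Matrix.one_mul, _root_.vecMulVec_mul_vecMulVec, hξw]
    ext α i
    simp only [Matrix.add_apply, Matrix.smul_apply, vecMulVec_apply, Pi.smul_apply,
      smul_eq_mul]
    field_simp
    ring
  have hinvD : ⅟D1 * vecMulVec w z = a⁻¹ • vecMulVec w z := by
    have h1 : ⅟D1 * (D1 * vecMulVec w z) = vecMulVec w z := by
      rw [← Matrix.mul_assoc, invOf_mul_self, Matrix.one_mul]
    rw [hDV, Matrix.mul_smul] at h1
    calc ⅟D1 * vecMulVec w z = a⁻¹ • (a • (⅟D1 * vecMulVec w z)) := by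
          rw [smul_smul, inv_mul_cancel₀ ha, one_smul]
      _ = a⁻¹ • vecMulVec w z := by rw [h1]
  have hSchur : A1 - vecMulVec u ξ * ⅟D1 * vecMulVec w z
      = (b + a⁻¹) • 1 + vecMulVec ((-(a ^ 2)⁻¹ - a⁻¹ * b) • u) z := by
    rw [Matrix.mul_assoc, hinvD, Matrix.mul_smul, _root_.vecMulVec_mul_vecMulVec, hξw, hA1]
    ext i j
    simp only [Matrix.sub_apply, Matrix.add_apply, Matrix.smul_apply, vecMulVec_apply,
      Pi.smul_apply, smul_eq_mul, Matrix.one_apply]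
    split_ifs <;> (field_simp; try ring)
  rw [hSchur]
  have hzx : z ⬝ᵥ ((-(a ^ 2)⁻¹ - a⁻¹ * b) • u) = (-(a ^ 2)⁻¹ - a⁻¹ * b) * (a - 1) := by
    rw [dotProduct_smul, hzu, smul_eq_mul]
  rw [det_smul_one_add_vecMulVec _ hc2, hzx, hdetD, hfacD]
  have hfacA : 1 + (b + a⁻¹)⁻¹ * ((-(a ^ 2)⁻¹ - a⁻¹ * b) * (a - 1)) = a⁻¹ := by
    have hs1 : 1 + a * b ≠ 0 := by rwa [add_comm]
    field_simp
    have hs2 : b * a + 1 ≠ 0 := by rwa [mul_comm]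
    rw [show (-1 - b * a) * (a - 1) / (b * a + 1) = -(a - 1) * ((b * a + 1) / (b * a + 1)) by ring,
      div_self hs2]
    ring
  rw [hfacA]
  have hRab : (((1 + nsq z) * nsq ξ : ℝ) : ℂ) = a * b := by
    rw [ha_def, hb_def]; push_cast; ring
  have hRs : ((1 + (1 + nsq z) * nsq ξ : ℝ) : ℂ) = a * b + 1 := by
    rw [ha_def, hb_def]; push_cast; ring
  rw [hRab, hRs]
  have hc'e : a + b⁻¹ = (a * b + 1) * b⁻¹ := by field_simp
  have hc2e : b + a⁻¹ = (a * b + 1) * a⁻¹ := by field_simp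
  rw [hc'e, hc2e, mul_pow, mul_pow, _root_.zpow_neg, zpow_natCast, neg_sub, zpow_sub₀ ha,
    zpow_natCast, zpow_natCast]
  simp only [inv_pow]
  field_simp
  ring
end
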